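/- ₄F₃(1/6, 1/3, 2/3, 5/6; 1/4, 1/2, 3/4; 729/1024) = 2·(2/(3√3+√59))^{1/3}/√59 + (3√6+√118)^{1/3}/√118 + 2·√((2/5)·(3√5/16 + 7/16)). -/

import Mathlib

noncomputable def poch (a : ℝ) (n : ℕ) : ℝ := ∏ i ∈ Finset.range n, (a + i)

/-!
The summand equals `C(6n, 2n) / 64ⁿ` (Gauss multiplication for the Pochhammer symbols), so the
sum is the even part `(G(1/8) + G(-1/8)) / 2` of `G(x) = ∑ C(3m, m) xᵐ`. Lagrange inversion gives
`G(s(1-s)²) = 1/(1-3s)`: summing the absolutely convergent double series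
`∑ C(3m, m) C(2m, j) sᵐ (-s)ʲ` along antidiagonals reduces it to
`∑ₘ C(3m, m) C(2m, N-m) (-1)^(N-m) = 3ᴺ`, the coefficient of `Xᴺ` in `((X+1)³ - 1)ᴺ`.
Eliminating `s` yields the cubic `(G - 1)(2G + 1)² = 27xG³` near `0`, and the identity theorem
extends it to the whole disc of convergence `|x| < 4/27`. At `x = ±1/8` it becomes
`5G³ - 24G - 8 = 0` and `59G³ - 24G - 8 = 0`, each with a single nonnegative root: `(3√5 + 5)/5`
for the first, and the root given by Cardano's formula for the second.
-/

open Finset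
open scoped NNReal

theorem poch_succ (a : ℝ) (n : ℕ) : poch a (n + 1) = poch a n * (a + n) := prod_range_succ _ _

theorem poch_one (n : ℕ) : poch 1 n = n.factorial := by
  induction n with
  | zero => simp [poch]
  | succ n ih => rw [poch_succ, ih, Nat.factorial_succ]; push_cast; ring

theorem factorial_mul_eq_pow_mul_prod_poch {k : ℕ} (hk : k ≠ 0) (n : ℕ) :
    ((k * n).factorial : ℝ) = (k : ℝ) ^ (k * n) * ∏ j ∈ range k, poch ((j + 1) / k) n := by
  induction n with
  | zero => simp [poch]
  | succ n ih =>
    have hk' : (k : ℝ) ≠ 0 := Nat.cast_ne_zero.mpr hk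
    rw [mul_add_one, ← Nat.factorial_mul_ascFactorial, Nat.ascFactorial_eq_prod_range, Nat.cast_mul,
      ih, pow_add, Nat.cast_prod]
    simp only [poch_succ, prod_mul_distrib]
    have hstep : ∏ i ∈ range k, ((k * n + 1 + i : ℕ) : ℝ)
        = (k : ℝ) ^ k * ∏ j ∈ range k, (((j : ℝ) + 1) / k + n) := by
      rw [show (k : ℝ) ^ k = ∏ _j ∈ range k, (k : ℝ) by simp, ← prod_mul_distrib]
      refine prod_congr rfl fun j _ => ?_
      push_cast
      field_simp
      ring
    rw [hstep]
    ring

theorem poch_pos {a : ℝ} (ha : 0 < a) (n : ℕ) : 0 < poch a n :=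
  prod_pos fun i _ => by positivity

theorem hypergeometric_term_eq (n : ℕ) :
    poch (1/6) n * poch (1/3) n * poch (2/3) n * poch (5/6) n
      / (poch (1/4) n * poch (1/2) n * poch (3/4) n * (Nat.factorial n))
      * (729/1024 : ℝ) ^ n
    = ((6 * n).choose (2 * n) : ℝ) * (1 / 8) ^ (2 * n) := by
  have h2 := factorial_mul_eq_pow_mul_prod_poch two_ne_zero n
  have h4 := factorial_mul_eq_pow_mul_prod_poch four_ne_zero n
  have h6 := factorial_mul_eq_pow_mul_prod_poch (by norm_num : 6 ≠ 0) n
  simp only [prod_range_succ, prod_range_zero, one_mul, Nat.cast_ofNat, Nat.cast_zero,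
    Nat.cast_one] at h2 h4 h6
  norm_num only [poch_one] at h2 h4 h6
  rw [Nat.cast_choose ℝ (by omega : 2 * n ≤ 6 * n), show 6 * n - 2 * n = 4 * n by omega, h2, h4, h6]
  have ho : (2 : ℝ) ^ (2 * n) = (2 ^ n) ^ 2 := by rw [pow_mul, pow_right_comm]
  have hp : (4 : ℝ) ^ (4 * n) = (2 ^ n) ^ 8 := by
    rw [pow_mul, pow_right_comm (2 : ℝ) n 8]; norm_num
  have hq : (6 : ℝ) ^ (6 * n) = (2 ^ n) ^ 6 * (3 ^ n) ^ 6 := by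
    rw [pow_mul, pow_right_comm (2 : ℝ) n 6, pow_right_comm (3 : ℝ) n 6, ← mul_pow]; norm_num
  have hr : (729 / 1024 : ℝ) ^ n = (3 ^ n) ^ 6 / (2 ^ n) ^ 10 := by
    rw [pow_right_comm (3 : ℝ) n 6, pow_right_comm (2 : ℝ) n 10, ← div_pow]; norm_num
  have hs : (1 / 8 : ℝ) ^ (2 * n) = 1 / (2 ^ n) ^ 6 := by
    rw [pow_mul, pow_right_comm (2 : ℝ) n 6, ← one_div_pow]; norm_num
  rw [ho, hp, hq, hr, hs]
  have := poch_pos (by norm_num : (0 : ℝ) < 1 / 4) n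
  have := poch_pos (by norm_num : (0 : ℝ) < 1 / 2) n
  have := poch_pos (by norm_num : (0 : ℝ) < 3 / 4) n
  have : (0 : ℝ) < n.factorial := by positivity
  field_simp

theorem hasSum_even_terms {c : ℕ → ℝ} {x a b : ℝ} (ha : HasSum (fun m => c m * x ^ m) a)
    (hb : HasSum (fun m => c m * (-x) ^ m) b) :
    HasSum (fun k => c (2 * k) * x ^ (2 * k)) ((a + b) / 2) := by
  have hsum := (ha.add hb).div_const 2
  rw [← (mul_right_injective₀ (two_ne_zero' ℕ)).hasSum_iff] at hsum
  · refine hsum.congr_fun fun k => ?_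
    simp only [Function.comp_apply, Even.neg_pow (even_two_mul k)]
    ring
  · rintro m hm
    obtain ⟨k, rfl⟩ : Odd m :=
      Nat.not_even_iff_odd.mp fun ⟨k, hk⟩ => hm ⟨k, show 2 * k = m by omega⟩
    rw [Odd.neg_pow ⟨k, rfl⟩]
    ring

open Polynomial in
theorem sum_choose_three_mul_mul_choose_two_mul_mul_neg_one_pow (R : Type*) [CommRing R] (N : ℕ) :
    ∑ m ∈ range (N + 1), ((3 * m).choose m : R) * (2 * m).choose (N - m) * (-1) ^ (N - m)
      = 3 ^ N := by
  have hfactor : ((X + 1 : R[X]) ^ 3 - 1) ^ N = X ^ N * (X ^ 2 + 3 * X + 3) ^ N := by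
    rw [← mul_pow]; ring
  have hexpand : ((X + 1 : R[X]) ^ 3 - 1) ^ N =
      ∑ m ∈ range (N + 1), (X + 1) ^ (3 * m) * C ((-1) ^ (N - m) * (N.choose m : R)) := by
    rw [sub_eq_add_neg, add_pow]
    refine sum_congr rfl fun m _ => ?_
    simp only [← pow_mul, map_mul, map_pow, map_neg, map_one, map_natCast]
    ring
  have hcoeff := congrArg (coeff · N) (hfactor.symm.trans hexpand)
  simp only [coeff_X_pow_mul', le_refl, if_true, Nat.sub_self, coeff_zero_eq_eval_zero, eval_pow,
    eval_add, eval_mul, eval_X, eval_ofNat, ne_eq, OfNat.ofNat_ne_zero, not_false_eq_true,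
    zero_pow, mul_zero, add_zero, zero_add, finsetSum_coeff, coeff_mul_C,
    coeff_X_add_one_pow] at hcoeff
  rw [hcoeff]
  refine sum_congr rfl fun m hm => ?_
  have hmN : m ≤ N := Nat.lt_succ_iff.mp (mem_range.mp hm)
  have hchoose : (3 * m).choose N * N.choose m = (3 * m).choose m * (2 * m).choose (N - m) := by
    rw [Nat.choose_mul hmN]; congr 2; omega
  rw [← Nat.cast_mul, ← hchoose]; push_cast; ring

theorem choose_three_mul_mul_le_one (m : ℕ) : ((3 * m).choose m : ℝ) * (4 / 27) ^ m ≤ 1 := by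
  have hterm : ((3 * m).choose m : ℝ) * (4 / 27) ^ m
      = (1 / 3 : ℝ) ^ m * (2 / 3) ^ (3 * m - m) * (3 * m).choose m := by
    rw [show 3 * m - m = 2 * m by omega, pow_mul, ← mul_pow]; norm_num; ring
  calc ((3 * m).choose m : ℝ) * (4 / 27) ^ m
      ≤ ∑ k ∈ range (3 * m + 1), (1 / 3 : ℝ) ^ k * (2 / 3) ^ (3 * m - k) * (3 * m).choose k := by
        rw [hterm]
        exact single_le_sum
          (f := fun k => (1 / 3 : ℝ) ^ k * (2 / 3) ^ (3 * m - k) * (3 * m).choose k)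
          (fun k _ => by positivity) (mem_range.mpr (by omega))
    _ = 1 := by rw [← add_pow]; norm_num

noncomputable def chooseThreeSeries (x : ℝ) : ℝ := ∑' m : ℕ, ((3 * m).choose m : ℝ) * x ^ m

theorem summable_chooseThreeSeries {x : ℝ} (hx : |x| < 4 / 27) :
    Summable fun m : ℕ => ((3 * m).choose m : ℝ) * x ^ m := by
  refine Summable.of_norm_bounded (summable_geometric_of_lt_one (by positivity)
    (by linarith : 27 / 4 * |x| < 1)) fun m => ?_
  calc ‖((3 * m).choose m : ℝ) * x ^ m‖
      = ((3 * m).choose m : ℝ) * (4 / 27) ^ m * (27 / 4 * |x|) ^ m := by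
        rw [norm_mul, norm_pow, Real.norm_natCast, Real.norm_eq_abs, mul_assoc, ← mul_pow]
        ring_nf
    _ ≤ (27 / 4 * |x|) ^ m :=
        mul_le_of_le_one_left (by positivity) (choose_three_mul_mul_le_one m)

theorem hasSum_chooseThreeSeries {x : ℝ} (hx : |x| < 4 / 27) :
    HasSum (fun m : ℕ => ((3 * m).choose m : ℝ) * x ^ m) (chooseThreeSeries x) :=
  (summable_chooseThreeSeries hx).hasSum

theorem hasSum_choose_mul_pow {R : Type*} [CommSemiring R] [TopologicalSpace R] (n : ℕ) (y : R) :
    HasSum (fun j => (n.choose j : R) * y ^ j) ((1 + y) ^ n) := by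
  have hfin := hasSum_sum_of_ne_finset_zero (L := .unconditional ℕ)
    (f := fun j => (n.choose j : R) * y ^ j) (s := range (n + 1)) fun j hj => by
      rw [Nat.choose_eq_zero_of_lt (by simpa using hj), Nat.cast_zero, zero_mul]
  convert hfin using 1
  rw [add_comm, add_pow]
  simp only [one_pow, mul_one, mul_comm]

theorem HasSum.sum_antidiagonal {α : Type*} [AddCommMonoid α] [TopologicalSpace α]
    [ContinuousAdd α] [RegularSpace α] {f : ℕ × ℕ → α} {a : α} (hf : HasSum f a) :
    HasSum (fun n => ∑ kl ∈ antidiagonal n, f kl) a := by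
  refine HasSum.sigma ((HasAntidiagonal.sigmaAntidiagonalEquivProd.hasSum_iff).mpr hf)
    fun n => ?_
  convert hasSum_fintype _
  exact (sum_coe_sort _ _).symm

theorem chooseThreeSeries_mul_one_sub_sq {s : ℝ} (hs : |s| * (1 + |s|) ^ 2 < 4 / 27) :
    chooseThreeSeries (s * (1 - s) ^ 2) = (1 - 3 * s)⁻¹ := by
  set F : ℕ × ℕ → ℝ := fun p => ((3 * p.1).choose p.1 : ℝ) * s ^ p.1 *
    (((2 * p.1).choose p.2 : ℝ) * (-s) ^ p.2) with hF
  have hrow_norm : ∀ m, HasSum (fun j => ‖F (m, j)‖)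
      (((3 * m).choose m : ℝ) * (|s| * (1 + |s|) ^ 2) ^ m) := fun m => by
    simp only [hF, norm_mul, norm_pow, norm_neg, Real.norm_eq_abs, Nat.abs_cast]
    rw [mul_pow, ← pow_mul, ← mul_assoc]
    exact (hasSum_choose_mul_pow (2 * m) |s|).mul_left _
  have habs : Summable fun p => ‖F p‖ := by
    refine (summable_prod_of_nonneg fun _ => norm_nonneg _).mpr
      ⟨fun m => (hrow_norm m).summable, ?_⟩
    simp only [fun m => (hrow_norm m).tsum_eq]
    exact summable_chooseThreeSeries (by rwa [abs_of_nonneg (by positivity)])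
  have hsum := habs.of_norm.hasSum
  have hrows :
      HasSum (fun m : ℕ => ((3 * m).choose m : ℝ) * (s * (1 - s) ^ 2) ^ m) (∑' p, F p) := by
    refine hsum.prod_fiberwise fun m => ?_
    rw [mul_pow, ← pow_mul, ← mul_assoc, sub_eq_add_neg]
    exact (hasSum_choose_mul_pow (2 * m) (-s)).mul_left _
  have hdiag : HasSum (fun N => (3 * s) ^ N) (∑' p, F p) := by
    refine hsum.sum_antidiagonal.congr_fun fun N => ?_
    rw [Nat.sum_antidiagonal_eq_sum_range_succ_mk, mul_pow,
      ← sum_choose_three_mul_mul_choose_two_mul_mul_neg_one_pow ℝ N, sum_mul]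
    refine sum_congr rfl fun m hm => ?_
    have hsN : s ^ m * s ^ (N - m) = s ^ N := by
      rw [← pow_add, Nat.add_sub_cancel' (Nat.lt_succ_iff.mp (mem_range.mp hm))]
    simp only [hF, neg_pow s, ← hsN]
    ring
  have hs3 : |3 * s| < 1 := by
    rw [abs_mul, abs_of_pos (by norm_num : (0:ℝ) < 3)]
    nlinarith [abs_nonneg s]
  rw [chooseThreeSeries, hrows.tsum_eq, ← (hasSum_geometric_of_abs_lt_one hs3).unique hdiag]

theorem hasFPowerSeriesOnBall_chooseThreeSeries :
    HasFPowerSeriesOnBall chooseThreeSeries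
      (FormalMultilinearSeries.ofScalars ℝ fun m => ((3 * m).choose m : ℝ)) 0 (4 / 27 : ℝ≥0) where
  r_le := FormalMultilinearSeries.le_radius_of_bound _ 1 fun m => by
    simpa [FormalMultilinearSeries.ofScalars_norm] using choose_three_mul_mul_le_one m
  r_pos := by norm_num
  hasSum {y} hy := by
    rw [Metric.eball_coe, Metric.mem_ball, dist_zero_right, Real.norm_eq_abs] at hy
    simpa [FormalMultilinearSeries.ofScalars_apply_eq, mul_comm] using hasSum_chooseThreeSeries hy

theorem exists_mul_one_sub_sq_eq {x : ℝ} (hx : |x| ≤ 361 / 8000) :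
    ∃ s, |s| ≤ 1 / 20 ∧ s * (1 - s) ^ 2 = x := by
  obtain ⟨s, ⟨hs₁, hs₂⟩, hsx⟩ := intermediate_value_Icc (by norm_num : (-1 / 20 : ℝ) ≤ 1 / 20)
    (f := fun s : ℝ => s * (1 - s) ^ 2) (by fun_prop)
    (show x ∈ Set.Icc _ _ by constructor <;> norm_num <;> linarith [abs_le.mp hx])
  exact ⟨s, abs_le.mpr ⟨by linarith, hs₂⟩, hsx⟩

theorem chooseThreeSeries_cubic {t : ℝ} (ht : |t| < 4 / 27) :
    (chooseThreeSeries t - 1) * (2 * chooseThreeSeries t + 1) ^ 2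
      = 27 * t * chooseThreeSeries t ^ 3 := by
  set G := chooseThreeSeries with hG_def
  have hG : AnalyticOnNhd ℝ G (Metric.ball 0 (4 / 27)) := by
    have := hasFPowerSeriesOnBall_chooseThreeSeries.analyticOnNhd
    rwa [Metric.eball_coe, NNReal.coe_div, NNReal.coe_ofNat, NNReal.coe_ofNat] at this
  have hΦ : AnalyticOnNhd ℝ (fun x => (G x - 1) * (2 * G x + 1) ^ 2 - 27 * x * G x ^ 3)
      (Metric.ball 0 (4 / 27)) :=
    ((hG.sub analyticOnNhd_const).mul
      (((analyticOnNhd_const.mul hG).add analyticOnNhd_const).pow 2)).sub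
      ((analyticOnNhd_const.mul analyticOnNhd_id).mul (hG.pow 3))
  have hnear : (fun x => (G x - 1) * (2 * G x + 1) ^ 2 - 27 * x * G x ^ 3) =ᶠ[nhds 0] 0 := by
    filter_upwards [Metric.closedBall_mem_nhds (0 : ℝ) (by norm_num : (0 : ℝ) < 361 / 8000)]
      with x hx
    rw [Metric.mem_closedBall, dist_zero_right, Real.norm_eq_abs] at hx
    obtain ⟨s, hs, rfl⟩ := exists_mul_one_sub_sq_eq hx
    have hs3 : 1 - 3 * s ≠ 0 := by linarith [abs_le.mp hs]
    have hsmall : |s| * (1 + |s|) ^ 2 < 4 / 27 :=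
      calc |s| * (1 + |s|) ^ 2 ≤ 1 / 20 * (1 + 1 / 20) ^ 2 := by gcongr
        _ < 4 / 27 := by norm_num
    rw [Pi.zero_apply, hG_def, chooseThreeSeries_mul_one_sub_sq hsmall]
    field_simp
    ring
  have := hΦ.eqOn_zero_of_preconnected_of_eventuallyEq_zero (convex_ball _ _).isPreconnected
    (Metric.mem_ball_self (by norm_num)) hnear (show t ∈ Metric.ball 0 (4 / 27) by simpa using ht)
  exact sub_eq_zero.mp this

theorem eq_of_cube_add_mul_eq {p x y : ℝ} (h : x ^ 3 + p * x = y ^ 3 + p * y)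
    (hpos : 0 < x ^ 2 + x * y + y ^ 2 + p) : x = y := by
  have : (x - y) * (x ^ 2 + x * y + y ^ 2 + p) = 0 := by linear_combination h
  exact sub_eq_zero.mp ((mul_eq_zero.mp this).resolve_right hpos.ne')

theorem chooseThreeSeries_eighth : chooseThreeSeries (1 / 8) = (3 * Real.sqrt 5 + 5) / 5 := by
  have h5 : Real.sqrt 5 ^ 2 = 5 := Real.sq_sqrt (by norm_num)
  have hcubic := chooseThreeSeries_cubic (t := 1 / 8) (by norm_num [abs_of_pos])
  have hnonneg : 0 ≤ chooseThreeSeries (1 / 8) := tsum_nonneg fun m => by positivity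
  have two_le : ∀ g : ℝ, 0 ≤ g → 5 * g ^ 3 - 24 * g - 8 = 0 → 2 ≤ g := fun g hg h => by
    by_contra! hlt
    nlinarith [mul_nonneg (mul_nonneg hg (sub_nonneg.2 hlt.le)) (by linarith : (0 : ℝ) ≤ 2 + g)]
  have hroot : 5 * ((3 * Real.sqrt 5 + 5) / 5) ^ 3 - 24 * ((3 * Real.sqrt 5 + 5) / 5) - 8 = 0 := by
    linear_combination ((27 * Real.sqrt 5 + 135) / 25) * h5
  have hG := two_le _ hnonneg (by linear_combination 8 * hcubic)
  have hr := two_le _ (by positivity) hroot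
  exact eq_of_cube_add_mul_eq (p := -24 / 5) (by linear_combination (8 * hcubic - hroot) / 5)
    (by nlinarith)

theorem chooseThreeSeries_neg_eighth {c : ℝ} (hc : 0 < c)
    (hc3 : c ^ 3 * (3 * Real.sqrt 3 + Real.sqrt 59) = 2) :
    chooseThreeSeries (-(1 / 8)) = (4 * c + 2 / c) / Real.sqrt 59 := by
  have h3 : Real.sqrt 3 ^ 2 = 3 := Real.sq_sqrt (by norm_num)
  have h59 : Real.sqrt 59 ^ 2 = 59 := Real.sq_sqrt (by norm_num)
  have hcubic := chooseThreeSeries_cubic (t := -(1 / 8)) (by norm_num [abs_of_pos])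
  have half_le : ∀ w : ℝ, 59 * w ^ 3 - 24 * w - 8 = 0 → 1 / 2 ≤ w := fun w h => by
    by_contra! hlt
    nlinarith [mul_nonneg (sq_nonneg (w + 3 / 8)) (by linarith : (0 : ℝ) ≤ 3 / 4 - w)]
  have hroot : 59 * ((4 * c + 2 / c) / Real.sqrt 59) ^ 3 - 24 * ((4 * c + 2 / c) / Real.sqrt 59)
      - 8 = 0 := by
    have hc3' : 16 * c ^ 3 = Real.sqrt 59 - 3 * Real.sqrt 3 := by
      refine mul_right_cancel₀ (by positivity : 3 * Real.sqrt 3 + Real.sqrt 59 ≠ 0) ?_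
      linear_combination 16 * hc3 - h59 + 9 * h3
    -- Cardano: `4c` and `2/c` have product `8` and cubes summing to `8√59`, since `c³` is a root
    -- of `8y² - √59 y + 1`.
    have hc6 : 8 * c ^ 6 - Real.sqrt 59 * c ^ 3 + 1 = 0 := by
      linear_combination ((16 * c ^ 3 - Real.sqrt 59 - 3 * Real.sqrt 3) * hc3' + 9 * h3 - h59) / 32
    field_simp
    linear_combination 472 * hc6 - (48 * c ^ 2 + 96 * c ^ 4 + 8 * Real.sqrt 59 * c ^ 3) * h59
  have hG := half_le _ (by linear_combination 8 * hcubic)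
  have hr := half_le _ hroot
  exact eq_of_cube_add_mul_eq (p := -24 / 59) (by linear_combination (8 * hcubic - hroot) / 59)
    (by nlinarith)

theorem three_mul_sqrt_six_add_sqrt_118_rpow {c : ℝ} (hc : 0 < c)
    (hc3 : c ^ 3 * (3 * Real.sqrt 3 + Real.sqrt 59) = 2) :
    (3 * Real.sqrt 6 + Real.sqrt 118) ^ ((1 : ℝ) / 3) = Real.sqrt 2 / c := by
  have hcube : (Real.sqrt 2 / c) ^ 3 = 3 * Real.sqrt 6 + Real.sqrt 118 := by
    have h2 : Real.sqrt 2 ^ 2 = 2 := Real.sq_sqrt (by norm_num)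
    rw [show (6 : ℝ) = 2 * 3 by norm_num, show (118 : ℝ) = 2 * 59 by norm_num,
      Real.sqrt_mul zero_le_two, Real.sqrt_mul zero_le_two, div_pow,
      div_eq_iff (pow_ne_zero _ hc.ne')]
    linear_combination Real.sqrt 2 * h2 - Real.sqrt 2 * hc3
  simpa [← hcube] using Real.pow_rpow_inv_natCast (by positivity : 0 ≤ Real.sqrt 2 / c)
    (n := 3) (by norm_num)

theorem sqrt_two_fifths_mul : Real.sqrt ((2 / 5) * (3 * Real.sqrt 5 / 16 + 7 / 16))
    = (3 * Real.sqrt 5 + 5) / 20 := by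
  have h5 : Real.sqrt 5 ^ 2 = 5 := Real.sq_sqrt (by norm_num)
  rw [Real.sqrt_eq_iff_mul_self_eq_of_pos (by positivity)]
  linear_combination (9 / 400) * h5

theorem fourF3_algebraic_value :
    ∑' n : ℕ,
        poch (1/6) n * poch (1/3) n * poch (2/3) n * poch (5/6) n
          / (poch (1/4) n * poch (1/2) n * poch (3/4) n * (Nat.factorial n))
          * (729/1024 : ℝ) ^ n =
      2 * (2 / (3 * Real.sqrt 3 + Real.sqrt 59)) ^ ((1:ℝ)/3) / Real.sqrt 59
        + (3 * Real.sqrt 6 + Real.sqrt 118) ^ ((1:ℝ)/3) / Real.sqrt 118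
        + 2 * Real.sqrt ((2/5) * (3 * Real.sqrt 5 / 16 + 7/16)) := by
  have hbase : 0 < 2 / (3 * Real.sqrt 3 + Real.sqrt 59) := by positivity
  set c := (2 / (3 * Real.sqrt 3 + Real.sqrt 59)) ^ ((1 : ℝ) / 3)
  have hc : 0 < c := Real.rpow_pos_of_pos hbase _
  have hc3 : c ^ 3 * (3 * Real.sqrt 3 + Real.sqrt 59) = 2 := by
    have := Real.rpow_inv_natCast_pow hbase.le (n := 3) (by norm_num)
    simp only [Nat.cast_ofNat, ← one_div] at this
    rw [this, div_mul_cancel₀ _ (by positivity)]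
  have hsum := hasSum_even_terms (hasSum_chooseThreeSeries (x := 1 / 8) (by norm_num))
    (hasSum_chooseThreeSeries (x := -(1 / 8)) (by norm_num))
  rw [(hsum.congr_fun fun n => by
      rw [hypergeometric_term_eq, show 3 * (2 * n) = 6 * n by ring]).tsum_eq,
    chooseThreeSeries_eighth, chooseThreeSeries_neg_eighth hc hc3,
    three_mul_sqrt_six_add_sqrt_118_rpow hc hc3, sqrt_two_fifths_mul,
    show (118 : ℝ) = 2 * 59 by norm_num, Real.sqrt_mul zero_le_two]
  field_simp
  ring
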